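/- Let Ω ⊆ ℝ^N be a domain, a bounded continuous on Ω, J a nonnegative continuous probability density on ℝ^N, and for σ > 0, m ≥ 0 define (M_{σ,m,Ω}φ)(x) = σ^{−m}( σ^{−N} ∫_Ω J((x−y)/σ) φ(y) dy − φ(x) ). Then for all σ > 0, −sup_Ω a ≤ λ_p(M_{σ,m,Ω} + a) ≤ σ^{−m} − sup_Ω a. In particular, for 0 < m ≤ 2, lim_{σ→+∞} λ_p(M_{σ,m,Ω} + a) = −sup_Ω a. -/

import Mathlib

/-!
Testing the definition of `λ_p` with the constant function `φ ≡ 1` gives the lower bound, because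
the rescaled kernel has mass `σ^{-N} ∫_Ω J((x - y)/σ) dy ≤ 1`. Conversely, dropping the
nonnegative integral term from the inequality `M φ + (a + λ) φ ≤ 0` leaves
`(a + λ - σ^{-m}) φ ≤ 0`, so every admissible `λ` is at most `σ^{-m} - sup_Ω a`.
Since `σ^{-m} → 0` for `m > 0`, the limit follows by squeezing.
-/

open MeasureTheory Filter Metric Set
open scoped Topology

noncomputable section

/-- Principal eigenvalue admissible set for the rescaled nonlocal operator
`M_{σ,m,Ω} φ (x) = σ^{-m} (σ^{-N} ∫_Ω J((x−y)/σ) φ(y) dy − φ(x))`. -/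
def lamSetM (N : ℕ) (σ m : ℝ) (Ω : Set (EuclideanSpace ℝ (Fin N)))
    (J : EuclideanSpace ℝ (Fin N) → ℝ)
    (a : EuclideanSpace ℝ (Fin N) → ℝ) : Set ℝ :=
  {l | ∃ φ : EuclideanSpace ℝ (Fin N) → ℝ, ContinuousOn φ Ω ∧ (∀ x ∈ Ω, 0 < φ x) ∧
    ∀ x ∈ Ω, σ ^ (-m) * ((σ ^ N)⁻¹ * (∫ y in Ω, J (σ⁻¹ • (x - y)) * φ y) - φ x)
      + (a x + l) * φ x ≤ 0}

section RescaledKernel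

variable {E : Type*} [NormedAddCommGroup E] [NormedSpace ℝ E] [FiniteDimensional ℝ E]
  [MeasurableSpace E] [BorelSpace E] (μ : Measure E) [μ.IsAddHaarMeasure] [μ.IsNegInvariant]

theorem integral_comp_inv_smul_sub (J : E → ℝ) {σ : ℝ} (hσ : 0 < σ) (x : E) :
    ∫ y, J (σ⁻¹ • (x - y)) ∂μ = σ ^ Module.finrank ℝ E * ∫ z, J z ∂μ := by
  have hshift : (fun y => J (σ⁻¹ • (x - y))) = fun y => J (σ⁻¹ • x - σ⁻¹ • y) := by
    simp only [smul_sub]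
  rw [hshift, Measure.integral_comp_inv_smul_of_nonneg μ (fun z => J (σ⁻¹ • x - z)) hσ.le,
    integral_sub_left_eq_self, smul_eq_mul]

theorem setIntegral_comp_inv_smul_sub_le {J : E → ℝ} (hJ0 : ∀ z, 0 ≤ J z) (hJi : Integrable J μ)
    (hJ1 : ∫ z, J z ∂μ = 1) (s : Set E) {σ : ℝ} (hσ : 0 < σ) (x : E) :
    ∫ y in s, J (σ⁻¹ • (x - y)) ∂μ ≤ σ ^ Module.finrank ℝ E := by
  have hint : Integrable (fun y => J (σ⁻¹ • (x - y))) μ := by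
    simp only [smul_sub]
    exact (hJi.comp_sub_left (σ⁻¹ • x)).comp_smul (inv_ne_zero hσ.ne')
  calc ∫ y in s, J (σ⁻¹ • (x - y)) ∂μ ≤ ∫ y, J (σ⁻¹ • (x - y)) ∂μ :=
        setIntegral_le_integral hint (Eventually.of_forall fun y => hJ0 _)
    _ = σ ^ Module.finrank ℝ E := by rw [integral_comp_inv_smul_sub μ J hσ, hJ1, mul_one]

end RescaledKernel

section PrincipalEigenvalueBounds

variable {N : ℕ} {σ m : ℝ} {Ω : Set (EuclideanSpace ℝ (Fin N))}
  {J a : EuclideanSpace ℝ (Fin N) → ℝ}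

theorem neg_mem_lamSetM_of_le (hJ0 : ∀ z, 0 ≤ J z) (hJi : Integrable J) (hJ1 : ∫ z, J z = 1)
    (hσ : 0 < σ) {c : ℝ} (hac : ∀ x ∈ Ω, a x ≤ c) : -c ∈ lamSetM N σ m Ω J a := by
  refine ⟨fun _ => 1, continuousOn_const, fun _ _ => one_pos, fun x hx => ?_⟩
  have hmass : (σ ^ N)⁻¹ * ∫ y in Ω, J (σ⁻¹ • (x - y)) ≤ 1 := by
    rw [inv_mul_le_iff₀ (pow_pos hσ N), mul_one]
    simpa [finrank_euclideanSpace_fin] using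
      setIntegral_comp_inv_smul_sub_le volume hJ0 hJi hJ1 Ω hσ x
  have hscale : 0 ≤ σ ^ (-m) := Real.rpow_nonneg hσ.le _
  simp only [mul_one]
  nlinarith [mul_nonneg hscale (sub_nonneg.2 hmass), hac x hx]

theorem le_sub_of_mem_lamSetM (hΩ : MeasurableSet Ω) (hJ0 : ∀ z, 0 ≤ J z) (hσ : 0 < σ) {l : ℝ}
    (hl : l ∈ lamSetM N σ m Ω J a) {x : EuclideanSpace ℝ (Fin N)} (hx : x ∈ Ω) :
    a x ≤ σ ^ (-m) - l := by
  obtain ⟨φ, -, hφpos, hφ⟩ := hl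
  have hconv : 0 ≤ σ ^ (-m) * ((σ ^ N)⁻¹ * ∫ y in Ω, J (σ⁻¹ • (x - y)) * φ y) :=
    mul_nonneg (Real.rpow_nonneg hσ.le _) <| mul_nonneg (inv_nonneg.2 (pow_pos hσ N).le) <|
      setIntegral_nonneg hΩ fun y hy => mul_nonneg (hJ0 _) (hφpos y hy).le
  have hneg : (a x + l - σ ^ (-m)) * φ x ≤ 0 := by nlinarith [hφ x hx]
  linarith [nonpos_of_mul_nonpos_left hneg (hφpos x hx)]

theorem sSup_lamSetM_mem_Icc (hΩ : MeasurableSet Ω) (hΩne : Ω.Nonempty) (hJ0 : ∀ z, 0 ≤ J z)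
    (hJi : Integrable J) (hJ1 : ∫ z, J z = 1) (ha : BddAbove (a '' Ω)) (hσ : 0 < σ) :
    sSup (lamSetM N σ m Ω J a) ∈ Icc (-sSup (a '' Ω)) (σ ^ (-m) - sSup (a '' Ω)) := by
  have hmem : -sSup (a '' Ω) ∈ lamSetM N σ m Ω J a :=
    neg_mem_lamSetM_of_le hJ0 hJi hJ1 hσ fun x hx => le_csSup ha (mem_image_of_mem a hx)
  have hub : ∀ l ∈ lamSetM N σ m Ω J a, l ≤ σ ^ (-m) - sSup (a '' Ω) := fun l hl => by
    have : sSup (a '' Ω) ≤ σ ^ (-m) - l :=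
      csSup_le (hΩne.image a) (forall_mem_image.2 fun x hx => le_sub_of_mem_lamSetM hΩ hJ0 hσ hl hx)
    linarith
  exact ⟨le_csSup ⟨_, hub⟩ hmem, csSup_le ⟨_, hmem⟩ hub⟩

end PrincipalEigenvalueBounds

theorem stmt13_general (N : ℕ) (m : ℝ)
    (Ω : Set (EuclideanSpace ℝ (Fin N)))
    (hΩo : IsOpen Ω) (hΩne : Ω.Nonempty)
    (J : EuclideanSpace ℝ (Fin N) → ℝ)
    (hJ0 : ∀ z, 0 ≤ J z)
    (hJi : Integrable J) (hJ1 : ∫ z, J z = 1)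
    (a : EuclideanSpace ℝ (Fin N) → ℝ)
    (haB : ∃ M, ∀ x ∈ Ω, |a x| ≤ M) :
    (∀ σ : ℝ, 0 < σ →
      -sSup (a '' Ω) ≤ sSup (lamSetM N σ m Ω J a) ∧
      sSup (lamSetM N σ m Ω J a) ≤ σ ^ (-m) - sSup (a '' Ω)) ∧
    (0 < m → m ≤ 2 →
      Tendsto (fun σ : ℝ => sSup (lamSetM N σ m Ω J a)) atTop (𝓝 (-sSup (a '' Ω)))) := by
  obtain ⟨M, hM⟩ := haB
  have ha : BddAbove (a '' Ω) := ⟨M, forall_mem_image.2 fun x hx => (abs_le.1 (hM x hx)).2⟩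
  have hbounds : ∀ σ : ℝ, 0 < σ →
      sSup (lamSetM N σ m Ω J a) ∈ Icc (-sSup (a '' Ω)) (σ ^ (-m) - sSup (a '' Ω)) :=
    fun σ hσ => sSup_lamSetM_mem_Icc hΩo.measurableSet hΩne hJ0 hJi hJ1 ha hσ
  refine ⟨hbounds, fun hm _ => ?_⟩
  have hupper : Tendsto (fun σ : ℝ => σ ^ (-m) - sSup (a '' Ω)) atTop (𝓝 (-sSup (a '' Ω))) := by
    simpa using (tendsto_rpow_neg_atTop hm).sub_const (sSup (a '' Ω))
  refine tendsto_of_tendsto_of_tendsto_of_le_of_le' tendsto_const_nhds hupper ?_ ?_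
  · filter_upwards [eventually_gt_atTop 0] with σ hσ using (hbounds σ hσ).1
  · filter_upwards [eventually_gt_atTop 0] with σ hσ using (hbounds σ hσ).2

/-- Bounds `−sup_Ω a ≤ λ_p(M_{σ,m,Ω} + a) ≤ σ^{−m} − sup_Ω a` for all `σ > 0`,
and, when `0 < m ≤ 2`, the limit `λ_p(M_{σ,m,Ω} + a) → −sup_Ω a` as `σ → ∞`. -/
theorem stmt13 (N : ℕ) (m : ℝ) (hm : 0 ≤ m)
    (Ω : Set (EuclideanSpace ℝ (Fin N)))
    (hΩo : IsOpen Ω) (hΩc : IsConnected Ω) (hΩne : Ω.Nonempty)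
    (J : EuclideanSpace ℝ (Fin N) → ℝ)
    (hJc : Continuous J) (hJ0 : ∀ z, 0 ≤ J z)
    (hJi : Integrable J) (hJ1 : ∫ z, J z = 1)
    (a : EuclideanSpace ℝ (Fin N) → ℝ)
    (hac : ContinuousOn a Ω) (haB : ∃ M, ∀ x ∈ Ω, |a x| ≤ M) :
    (∀ σ : ℝ, 0 < σ →
      -sSup (a '' Ω) ≤ sSup (lamSetM N σ m Ω J a) ∧
      sSup (lamSetM N σ m Ω J a) ≤ σ ^ (-m) - sSup (a '' Ω)) ∧
    (0 < m → m ≤ 2 →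
      Tendsto (fun σ : ℝ => sSup (lamSetM N σ m Ω J a)) atTop (𝓝 (-sSup (a '' Ω)))) :=
  stmt13_general N m Ω hΩo hΩne J hJ0 hJi hJ1 a haB
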